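/- arXiv:1911.09072 — 3 statements merged into one kernel-verified Lean document; each statement's English description precedes it below -/
import Mathlib

section
/- Let A = (a_1,…,a_p) be a finite list of vectors in ℕ^n and b ∈ ℕ^n a nonzero vector with b ∈ ⟨A⟩, say b = Σ_{j=1}^p d_j a_j with d_j ∈ ℕ. Let k_1, k_2 be positive integers such that k_1 is relatively prime to gcd(b_1,…,b_n) and to k_2. Then for C = k_1A ∪ {k_2b} = (k_1a_1,…,k_1a_p, k_2b), with variable y corresponding to k_2b, one has I_C = I_A + ⟨ρ⟩ where ρ = y^{k_1} − ∏_{j=1}^p x_j^{d_j k_2}; in particular ⟨C⟩ is a gluing of ⟨A⟩ and ⟨b⟩. -/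
open MvPolynomial

/-- The toric ideal `I_A ⊆ k[x_j : j ∈ σ]` of a family `A` of vectors in `ℕ^n`:
the kernel of the `k`-algebra map sending `x_j` to `t^{a_j} = ∏ i, t_i^{(a_j)_i}`. -/
noncomputable def toricIdeal (k : Type) [Field k] {σ : Type} {n : ℕ} (A : σ → Fin n → ℕ) :
    Ideal (MvPolynomial σ k) :=
  RingHom.ker (aeval (R := k) fun j => ∏ i, (X i : MvPolynomial (Fin n) k) ^ A j i)

/-!
Since `ρ` is monic in `y`, every `f` is congruent modulo `ρ` to some `r = ∑_{e < k₁} r_e(x) y^e`.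
The toric map of `C` sends `r_e(x) y^e` to `t^{e k₂ b}` times a polynomial in the `t_i^{k₁}`.
As `k₁` is prime to `gcd(k₂ b)`, the vectors `e k₂ b` with `e < k₁` are pairwise incongruent
modulo `k₁`, so these images have disjoint supports. Hence `f ∈ I_C` forces every `r_e ∈ I_A`.
-/

theorem Nat.eq_of_forall_mul_modEq {ι : Type*} {s : Finset ι} {v : ι → ℕ} {m e e' : ℕ}
    (hv : Nat.Coprime m (s.gcd v)) (he : e < m) (he' : e' < m)
    (h : ∀ i ∈ s, e * v i ≡ e' * v i [MOD m]) : e = e' := by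
  wlog hlt : e' < e generalizing e e'
  · rcases (not_lt.mp hlt).lt_or_eq with hlt | rfl
    · exact (this he' he (fun i hi => (h i hi).symm) hlt).symm
    · rfl
  have hdvd : ∀ i ∈ s, m ∣ (e - e') * v i := fun i hi => by
    rw [Nat.sub_mul]
    exact (Nat.modEq_iff_dvd' (Nat.mul_le_mul_right _ hlt.le)).mp (h i hi).symm
  have hdvd_gcd : m ∣ (e - e') * s.gcd v := by
    simpa only [Finset.gcd_mul_left, normalize_eq] using Finset.dvd_gcd hdvd
  have := Nat.eq_zero_of_dvd_of_lt (hv.dvd_of_dvd_mul_right hdvd_gcd) (by omega)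
  omega

namespace MvPolynomial

theorem eq_zero_of_sum_monomial_mul_expand_eq_zero {ι σ R : Type*} [CommSemiring R]
    {m : ℕ} (hm : m ≠ 0) {s : Finset ι} {w : ι → σ →₀ ℕ} {g : ι → MvPolynomial σ R}
    (hw : ∀ e ∈ s, ∀ e' ∈ s, (∀ i, w e' i ≡ w e i [MOD m]) → e' = e)
    (h : ∑ e ∈ s, monomial (w e) 1 * expand m (g e) = 0) {e : ι} (he : e ∈ s) : g e = 0 := by
  classical
  ext u
  have hcoeff := congrArg (coeff (w e + m • u)) h
  rw [coeff_sum, coeff_zero, Finset.sum_eq_single_of_mem e he, coeff_monomial_mul, one_mul,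
    coeff_expand_smul _ hm] at hcoeff
  · simpa using hcoeff
  intro e' he' hne
  rw [coeff_monomial_mul', one_mul]
  split_ifs with hle
  · by_contra hne0
    refine hne (hw e he e' he' fun i => ?_)
    have hdvd : m ∣ (w e + m • u - w e') i := by
      by_contra hi
      exact hne0 (coeff_expand_of_not_dvd _ hi)
    have hle_i : w e' i ≤ w e i + m * u i := by simpa using hle i
    simp only [Finsupp.tsub_apply, Finsupp.add_apply, Finsupp.smul_apply, smul_eq_mul] at hdvd
    calc w e' i ≡ w e i + m * u i [MOD m] := (Nat.modEq_iff_dvd' hle_i).mpr hdvd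
      _ ≡ w e i [MOD m] := by simp [Nat.ModEq]
  · rfl

noncomputable def sumUnitEquivPolynomial (R σ : Type*) [CommRing R] :
    MvPolynomial (σ ⊕ Unit) R ≃ₐ[R] Polynomial (MvPolynomial σ R) :=
  (renameEquiv R (Equiv.optionEquivSumPUnit σ).symm).trans (optionEquivLeft R σ)

variable {R σ : Type*} [CommRing R]

@[simp]
theorem sumUnitEquivPolynomial_X_inr :
    sumUnitEquivPolynomial R σ (X (Sum.inr ())) = Polynomial.X := by
  simp [sumUnitEquivPolynomial, optionEquivLeft_X_none]

@[simp]
theorem sumUnitEquivPolynomial_rename_inl (c : MvPolynomial σ R) :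
    sumUnitEquivPolynomial R σ (rename Sum.inl c) = Polynomial.C c := by
  have : ((sumUnitEquivPolynomial R σ).toAlgHom.comp (rename Sum.inl)) =
      Polynomial.CAlgHom := by
    ext j
    simp [sumUnitEquivPolynomial, optionEquivLeft_X_some]
  exact DFunLike.congr_fun this c

theorem exists_sub_sum_mem_span_X_pow_sub (m₀ : MvPolynomial σ R) {m : ℕ} (hm : m ≠ 0)
    (f : MvPolynomial (σ ⊕ Unit) R) :
    ∃ c : ℕ → MvPolynomial σ R,
      f - ∑ e ∈ Finset.range m, rename Sum.inl (c e) * X (Sum.inr ()) ^ e ∈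
        Ideal.span {X (Sum.inr ()) ^ m - rename Sum.inl m₀} := by
  nontriviality R
  set E := sumUnitEquivPolynomial R σ
  set g : Polynomial (MvPolynomial σ R) := Polynomial.X ^ m - Polynomial.C m₀
  have hg : g.Monic := Polynomial.monic_X_pow_sub_C m₀ hm
  have hdeg : (E f %ₘ g).natDegree < m := by
    have hg1 : g ≠ 1 := fun h => by
      simpa [g, Polynomial.natDegree_X_pow_sub_C, hm] using congrArg Polynomial.natDegree h
    simpa [g, Polynomial.natDegree_X_pow_sub_C] using Polynomial.natDegree_modByMonic_lt _ hg hg1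
  refine ⟨(E f %ₘ g).coeff, Ideal.mem_span_singleton'.mpr ⟨E.symm (E f /ₘ g), E.injective ?_⟩⟩
  have hr : E (∑ e ∈ Finset.range m, rename Sum.inl ((E f %ₘ g).coeff e) * X (Sum.inr ()) ^ e) =
      E f %ₘ g := by
    simp only [map_sum, map_mul, map_pow, sumUnitEquivPolynomial_rename_inl, E,
      sumUnitEquivPolynomial_X_inr]
    exact (Polynomial.as_sum_range_C_mul_X_pow' _ hdeg).symm
  have hρ : E (X (Sum.inr ()) ^ m - rename Sum.inl m₀) = g := by
    simp only [map_sub, map_pow, sumUnitEquivPolynomial_rename_inl, E,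
      sumUnitEquivPolynomial_X_inr, g]
  rw [map_sub, hr, map_mul, AlgEquiv.apply_symm_apply, hρ]
  linear_combination Polynomial.modByMonic_add_div (E f) g

end MvPolynomial

noncomputable abbrev toricMap (R : Type*) [CommSemiring R] {σ : Type*} {n : ℕ}
    (A : σ → Fin n → ℕ) : MvPolynomial σ R →ₐ[R] MvPolynomial (Fin n) R :=
  aeval fun j => ∏ i, X i ^ A j i

section ToricMap

variable {R : Type*} [CommSemiring R] {σ τ : Type*} {n : ℕ}

@[simp]
theorem toricMap_X (A : σ → Fin n → ℕ) (j : σ) :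
    toricMap R A (X j) = monomial (Finsupp.equivFunOnFinite.symm (A j)) 1 := by
  rw [aeval_X, monomial_eq, C_1, one_mul, Finsupp.prod_fintype _ _ fun _ => pow_zero _]
  rfl

theorem toricMap_comp_rename (A : τ → Fin n → ℕ) (f : σ → τ) :
    (toricMap R A).comp (rename f) = toricMap R (A ∘ f) :=
  algHom_ext fun j => by simp

theorem toricMap_mul_left (A : σ → Fin n → ℕ) (m : ℕ) :
    toricMap R (fun j i => m * A j i) = (expand m).comp (toricMap R A) :=
  algHom_ext fun j => by
    simp only [toricMap_X, AlgHom.comp_apply, expand_monomial]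
    congr 2
    exact Finsupp.ext fun i => by simp

theorem toricMap_sumElim_rename_inl (A : σ → Fin n → ℕ) (B : τ → Fin n → ℕ) (m : ℕ)
    (g : MvPolynomial σ R) :
    toricMap R (Sum.elim (fun j i => m * A j i) B) (rename Sum.inl g) =
      expand m (toricMap R A g) := by
  rw [← AlgHom.comp_apply, toricMap_comp_rename, Sum.elim_comp_inl, toricMap_mul_left,
    AlgHom.comp_apply]

theorem toricMap_sum_rename_mul_X_pow (A : σ → Fin n → ℕ) (v : Fin n → ℕ) (m : ℕ)
    (s : Finset ℕ) (c : ℕ → MvPolynomial σ R) :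
    toricMap R (Sum.elim (fun j i => m * A j i) fun _ : Unit => v)
        (∑ e ∈ s, rename Sum.inl (c e) * X (Sum.inr ()) ^ e) =
      ∑ e ∈ s, monomial (e • Finsupp.equivFunOnFinite.symm v) 1 *
        expand m (toricMap R A (c e)) := by
  simp only [map_sum, map_mul, map_pow, toricMap_sumElim_rename_inl, toricMap_X, Sum.elim_inr,
    monomial_pow, one_pow, mul_comm]

end ToricMap

section ToricIdeal

variable {k : Type} [Field k] {σ τ : Type} {n : ℕ}

theorem mem_toricIdeal_iff (A : σ → Fin n → ℕ) (f : MvPolynomial σ k) :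
    f ∈ toricIdeal k A ↔ toricMap k A f = 0 :=
  RingHom.mem_ker

theorem map_rename_inl_toricIdeal_le (A : σ → Fin n → ℕ) (B : τ → Fin n → ℕ) (m : ℕ) :
    Ideal.map (rename Sum.inl) (toricIdeal k A) ≤
      toricIdeal k (Sum.elim (fun j i => m * A j i) B) := by
  rw [Ideal.map_le_iff_le_comap]
  intro g hg
  rw [Ideal.mem_comap, mem_toricIdeal_iff, toricMap_sumElim_rename_inl,
    (mem_toricIdeal_iff A g).mp hg, map_zero]

theorem sum_mem_map_rename_inl_of_mem_toricIdeal (A : σ → Fin n → ℕ) (v : Fin n → ℕ) {m : ℕ}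
    (hm : m ≠ 0) (hv : Nat.Coprime m (Finset.univ.gcd v)) (c : ℕ → MvPolynomial σ k)
    (h : ∑ e ∈ Finset.range m, rename Sum.inl (c e) * X (Sum.inr ()) ^ e ∈
      toricIdeal k (Sum.elim (fun j i => m * A j i) fun _ : Unit => v)) :
    ∑ e ∈ Finset.range m, rename Sum.inl (c e) * X (Sum.inr ()) ^ e ∈
      Ideal.map (rename Sum.inl) (toricIdeal k A) := by
  rw [mem_toricIdeal_iff, toricMap_sum_rename_mul_X_pow] at h
  have hc (e : ℕ) (he : e ∈ Finset.range m) : c e ∈ toricIdeal k A := by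
    refine (mem_toricIdeal_iff A _).mpr (eq_zero_of_sum_monomial_mul_expand_eq_zero hm ?_ h he)
    intro e he e' he' hmod
    refine Nat.eq_of_forall_mul_modEq hv (Finset.mem_range.mp he') (Finset.mem_range.mp he)
      fun i _ => by simpa using hmod i
  exact Ideal.sum_mem _ fun e he => Ideal.mul_mem_right _ _ (Ideal.mem_map_of_mem _ (hc e he))

theorem X_pow_sub_prod_mem_toricIdeal {p : ℕ} (A : Fin p → Fin n → ℕ)
    (b : Fin n → ℕ) (d : Fin p → ℕ) (hbA : ∀ i, b i = ∑ j, d j * A j i) (k1 k2 : ℕ) :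
    (X (Sum.inr ()) ^ k1 - ∏ j, X (Sum.inl j) ^ (d j * k2) : MvPolynomial (Fin p ⊕ Unit) k) ∈
      toricIdeal k (Sum.elim (fun j i => k1 * A j i) (fun _ : Unit => fun i => k2 * b i)) := by
  rw [mem_toricIdeal_iff, map_sub, sub_eq_zero]
  simp only [map_pow, map_prod, toricMap_X, Sum.elim_inr, Sum.elim_inl, monomial_pow, one_pow,
    ← monomial_sum_one]
  congr 2
  refine Finsupp.ext fun i => ?_
  simp only [Finsupp.smul_apply, Finsupp.finsetSum_apply,
    Finsupp.coe_equivFunOnFinite_symm, smul_eq_mul, hbA, Finset.mul_sum]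
  exact Finset.sum_congr rfl fun j _ => by ring

end ToricIdeal

theorem glue_of_b_in_A_general (k : Type) [Field k] {n p : ℕ}
    (A : Fin p → Fin n → ℕ) (b : Fin n → ℕ)
    (d : Fin p → ℕ) (hbA : ∀ i, b i = ∑ j, d j * A j i)
    (k1 k2 : ℕ) (hk1 : 0 < k1)
    (hcop : Nat.Coprime k1 k2) (hcopb : Nat.Coprime k1 (Finset.univ.gcd b)) :
    toricIdeal k (Sum.elim (fun j i => k1 * A j i) (fun _ : Unit => fun i => k2 * b i)) =
      Ideal.map (rename Sum.inl) (toricIdeal k A) ⊔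
      Ideal.span {(X (Sum.inr ()) ^ k1 : MvPolynomial (Fin p ⊕ Unit) k) -
        ∏ j, X (Sum.inl j) ^ (d j * k2)} := by
  have hρ := X_pow_sub_prod_mem_toricIdeal (k := k) A b d hbA k1 k2
  refine le_antisymm (fun f hf => ?_) (sup_le (map_rename_inl_toricIdeal_le A _ k1)
    ((Ideal.span_singleton_le_iff_mem _).mpr hρ))
  obtain ⟨c, hc⟩ := exists_sub_sum_mem_span_X_pow_sub (∏ j, X j ^ (d j * k2)) hk1.ne' f
  simp only [map_prod, map_pow, rename_X] at hc
  set r := ∑ e ∈ Finset.range k1, rename Sum.inl (c e) * X (Sum.inr ()) ^ e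
  have hr := sub_mem hf ((Ideal.span_singleton_le_iff_mem _).mpr hρ hc)
  rw [sub_sub_cancel] at hr
  have hcopC : Nat.Coprime k1 (Finset.univ.gcd fun i => k2 * b i) := by
    rw [Finset.gcd_mul_left, normalize_eq]
    exact hcop.mul_right hcopb
  rw [← add_sub_cancel r f]
  exact Ideal.add_mem _
    (Ideal.mem_sup_left (sum_mem_map_rename_inl_of_mem_toricIdeal A _ hk1.ne' hcopC c hr))
    (Ideal.mem_sup_right hc)

/-- If `b = Σ d_j a_j ∈ ⟨A⟩` and `k₁` is relatively prime to `gcd(b₁,…,b_n)` and to `k₂`,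
then for `C = k₁A ∪ {k₂b}`, one has `I_C = I_A + ⟨ρ⟩` with `ρ = y^{k₁} − ∏ x_j^{d_j k₂}`;
in particular `⟨C⟩` is a gluing of `⟨A⟩` and `⟨b⟩`. -/
theorem glue_of_b_in_A (k : Type) [Field k] {n p : ℕ}
    (A : Fin p → Fin n → ℕ) (b : Fin n → ℕ) (hb : b ≠ 0)
    (d : Fin p → ℕ) (hbA : ∀ i, b i = ∑ j, d j * A j i)
    (k1 k2 : ℕ) (hk1 : 0 < k1) (hk2 : 0 < k2)
    (hcop : Nat.Coprime k1 k2) (hcopb : Nat.Coprime k1 (Finset.univ.gcd b)) :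
    toricIdeal k (Sum.elim (fun j i => k1 * A j i) (fun _ : Unit => fun i => k2 * b i)) =
      Ideal.map (rename Sum.inl) (toricIdeal k A) ⊔
      Ideal.span {(X (Sum.inr ()) ^ k1 : MvPolynomial (Fin p ⊕ Unit) k) -
        ∏ j, X (Sum.inl j) ^ (d j * k2)} :=
  glue_of_b_in_A_general k A b d hbA k1 k2 hk1 hcop hcopb
end

section
/- Let A = (a_1,…,a_p) ⊂ ℕ^n (also viewed as an n×p matrix), let b ∈ ℕ^n be nonzero with gcd(b_1,…,b_n) = 1, let u_1,…,u_q be positive integers, and set B = (u_1b,…,u_qb). Let k_1, k_2 be positive integers with gcd(k_1,k_2) = 1 and set C = k_1A ∪ k_2B. For α ∈ ℤ^q and β ∈ ℤ^p, write α_+ = {j : α_j > 0}, α_− = {j : α_j < 0} and similarly for β. Then the binomial w = (∏_{j∈α_+} y_j^{α_j})(∏_{j∈β_−} x_j^{−β_j}) − (∏_{j∈α_−} y_j^{−α_j})(∏_{j∈β_+} x_j^{β_j}) belongs to the toric ideal I_C if and only if there exists s ∈ ℤ such that Σ_{j=1}^q α_j u_j = k_1·s and A·β = k_2·s·b. -/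
/-!
Under the toric map both terms of the binomial go to monomials, so the binomial lies in `I_C`
exactly when the two exponent vectors agree, i.e. when `C · (-β, α) = 0`, which reads
`k₂ (Σ αⱼ uⱼ) b = k₁ A β`. As `gcd(b) = 1` and `gcd(k₁, k₂) = 1`, this forces `k₁ ∣ Σ αⱼ uⱼ`,
and the quotient is the common level `s`.
-/

open MvPolynomial

open Finset

theorem Finset.dvd_of_forall_dvd_mul_of_gcd_eq_one {ι α : Type*} [CommMonoidWithZero α]
    [NormalizedGCDMonoid α] {s : Finset ι} {f : ι → α} (hf : s.gcd f = 1) {a c : α}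
    (h : ∀ i ∈ s, a ∣ c * f i) : a ∣ c := by
  have hassoc := s.gcd_mul_left' f c
  rw [hf, mul_one] at hassoc
  exact hassoc.dvd_iff_dvd_right.mp (dvd_gcd h)

theorem forall_mul_eq_mul_iff_exists_level {ι : Type*} [Fintype ι] {b : ι → ℕ}
    (hb : univ.gcd b = 1) {k₁ k₂ : ℕ} (hk₁ : k₁ ≠ 0) (hcop : k₁.Coprime k₂) {S : ℤ}
    {T : ι → ℤ} :
    (∀ i, k₂ * S * b i = k₁ * T i) ↔ ∃ s : ℤ, S = k₁ * s ∧ ∀ i, T i = k₂ * s * b i := by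
  constructor
  · intro h
    have hco : IsCoprime (k₁ : ℤ) k₂ := Nat.isCoprime_iff_coprime.mpr hcop
    have hdvd : ∀ i ∈ univ, k₁ ∣ S.natAbs * b i := fun i _ => by
      have : (k₁ : ℤ) ∣ S * b i := hco.dvd_of_dvd_mul_left ⟨T i, by rw [← mul_assoc, h i]⟩
      simpa [Int.natAbs_mul] using Int.natAbs_dvd_natAbs.mpr this
    obtain ⟨s, rfl⟩ := Int.natCast_dvd.mpr (dvd_of_forall_dvd_mul_of_gcd_eq_one hb hdvd)
    refine ⟨s, rfl, fun i => mul_left_cancel₀ (Int.natCast_ne_zero.mpr hk₁) ?_⟩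
    linear_combination -(h i)
  · rintro ⟨s, rfl, hT⟩ i
    rw [hT]
    ring

namespace MvPolynomial

variable {R : Type*} [CommSemiring R]

theorem prod_X_pow_eq_monomial' {ι : Type*} [Fintype ι] (d : ι → ℕ) :
    ∏ i, (X i : MvPolynomial ι R) ^ d i = monomial (Finsupp.equivFunOnFinite.symm d) 1 := by
  rw [monomial_eq, C_1, one_mul, Finsupp.prod_fintype _ _ fun _ => pow_zero _]
  rfl

theorem prod_X_pow_injective [Nontrivial R] {ι : Type*} [Fintype ι] :
    Function.Injective fun d : ι → ℕ => ∏ i, (X i : MvPolynomial ι R) ^ d i := by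
  intro d d' h
  simp only [prod_X_pow_eq_monomial'] at h
  exact Finsupp.equivFunOnFinite.symm.injective (monomial_left_injective one_ne_zero h)

theorem aeval_prod_X_pow {σ ι S : Type*} [Fintype σ] [Fintype ι] [CommSemiring S] [Algebra R S]
    (t : ι → S) (A : σ → ι → ℕ) (e : σ → ℕ) :
    aeval (R := R) (fun j => ∏ i, t i ^ A j i) (∏ j, X j ^ e j) = ∏ i, t i ^ ∑ j, e j * A j i := by
  simp_rw [map_prod, map_pow, aeval_X, ← prod_pow, ← pow_mul]
  rw [prod_comm]
  simp_rw [prod_pow_eq_pow_sum, mul_comm]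

end MvPolynomial

variable {k : Type} [Field k] {σ : Type} [Fintype σ] {n : ℕ}

theorem sub_mem_toricIdeal_iff (A : σ → Fin n → ℕ) (e f : σ → ℕ) :
    ∏ j, X j ^ e j - ∏ j, X j ^ f j ∈ toricIdeal k A ↔
      ∀ i, ∑ j, e j * A j i = ∑ j, f j * A j i := by
  rw [toricIdeal, RingHom.mem_ker, map_sub, sub_eq_zero, aeval_prod_X_pow, aeval_prod_X_pow,
    prod_X_pow_injective.eq_iff, funext_iff]

theorem binomial_mem_toricIdeal_iff (A : σ → Fin n → ℕ) (γ : σ → ℤ) :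
    ∏ j, X j ^ (γ j).toNat - ∏ j, X j ^ (-γ j).toNat ∈ toricIdeal k A ↔
      ∀ i, ∑ j, γ j * A j i = 0 := by
  rw [sub_mem_toricIdeal_iff]
  refine forall_congr' fun i => ?_
  rw [← Nat.cast_inj (R := ℤ), ← sub_eq_zero]
  push_cast
  simp_rw [← sum_sub_distrib, ← sub_mul, Int.toNat_sub_toNat_neg]

theorem binomial_mem_iff_level_general (k : Type) [Field k] {n p q : ℕ}
    (A : Fin p → Fin n → ℕ) (b : Fin n → ℕ)
    (hgcdb : Finset.univ.gcd b = 1)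
    (u : Fin q → ℕ)
    (k1 k2 : ℕ) (hk1 : 0 < k1) (hcop : Nat.Coprime k1 k2)
    (α : Fin q → ℤ) (β : Fin p → ℤ) :
    ((∏ j, X (Sum.inr j) ^ (α j).toNat) * (∏ j, X (Sum.inl j) ^ (-β j).toNat) -
        (∏ j, X (Sum.inr j) ^ (-α j).toNat) * (∏ j, X (Sum.inl j) ^ (β j).toNat) :
        MvPolynomial (Fin p ⊕ Fin q) k) ∈
      toricIdeal k (Sum.elim (fun j i => k1 * A j i) (fun j i => k2 * (u j * b i))) ↔
    ∃ s : ℤ, (∑ j, α j * (u j : ℤ) = (k1 : ℤ) * s) ∧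
      ∀ i, ∑ j, β j * (A j i : ℤ) = (k2 : ℤ) * s * (b i : ℤ) := by
  set C : Fin p ⊕ Fin q → Fin n → ℕ :=
    Sum.elim (fun j i => k1 * A j i) (fun j i => k2 * (u j * b i))
  set γ : Fin p ⊕ Fin q → ℤ := Sum.elim (-β) α
  have hbinomial : ((∏ j, X (Sum.inr j) ^ (α j).toNat) * (∏ j, X (Sum.inl j) ^ (-β j).toNat) -
        (∏ j, X (Sum.inr j) ^ (-α j).toNat) * (∏ j, X (Sum.inl j) ^ (β j).toNat) :
        MvPolynomial (Fin p ⊕ Fin q) k) = ∏ x, X x ^ (γ x).toNat - ∏ x, X x ^ (-γ x).toNat := by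
    simp [γ, Fintype.prod_sum_type, mul_comm]
  rw [hbinomial, binomial_mem_toricIdeal_iff,
    ← forall_mul_eq_mul_iff_exists_level hgcdb hk1.ne' hcop]
  refine forall_congr' fun i => ?_
  have hsum : ∑ x, γ x * C x i = k2 * (∑ j, α j * u j) * b i - k1 * ∑ j, β j * A j i := by
    simp only [γ, C, Fintype.sum_sum_type, Sum.elim_inl, Sum.elim_inr, Pi.neg_apply, mul_sum,
      sum_mul, sub_eq_neg_add, ← sum_neg_distrib]
    push_cast
    congr 1 <;> exact sum_congr rfl fun j _ => by ring
  rw [hsum, sub_eq_zero]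

/-- Membership criterion for binomials in `I_C` when `C = k₁A ∪ k₂B` and `B = (u₁b,…,u_qb)`:
the binomial `(∏_{αⱼ>0} y_j^{α_j})(∏_{βⱼ<0} x_j^{−β_j}) − (∏_{αⱼ<0} y_j^{−α_j})(∏_{βⱼ>0} x_j^{β_j})`
lies in `I_C` if and only if there is `s ∈ ℤ` with `Σ α_j u_j = k₁·s` and `A·β = k₂·s·b`. -/
theorem binomial_mem_iff_level (k : Type) [Field k] {n p q : ℕ}
    (A : Fin p → Fin n → ℕ) (b : Fin n → ℕ) (hb : b ≠ 0)
    (hgcdb : Finset.univ.gcd b = 1)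
    (u : Fin q → ℕ) (hu : ∀ j, 0 < u j)
    (k1 k2 : ℕ) (hk1 : 0 < k1) (hk2 : 0 < k2) (hcop : Nat.Coprime k1 k2)
    (α : Fin q → ℤ) (β : Fin p → ℤ) :
    ((∏ j, X (Sum.inr j) ^ (α j).toNat) * (∏ j, X (Sum.inl j) ^ (-β j).toNat) -
        (∏ j, X (Sum.inr j) ^ (-α j).toNat) * (∏ j, X (Sum.inl j) ^ (β j).toNat) :
        MvPolynomial (Fin p ⊕ Fin q) k) ∈
      toricIdeal k (Sum.elim (fun j i => k1 * A j i) (fun j i => k2 * (u j * b i))) ↔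
    ∃ s : ℤ, (∑ j, α j * (u j : ℤ) = (k1 : ℤ) * s) ∧
      ∀ i, ∑ j, β j * (A j i : ℤ) = (k2 : ℤ) * s * (b i : ℤ) :=
  binomial_mem_iff_level_general k A b hgcdb u k1 k2 hk1 hcop α β
end

section
/- Let A = (a_1,…,a_p) ⊂ ℕ^n (also viewed as an n×p matrix), let b ∈ ℕ^n be nonzero with gcd(b_1,…,b_n) = 1, let u_1,…,u_q be positive integers with q ≥ 2, and set B = (u_1b,…,u_qb) (so all elements of B lie on the line through b). Then ⟨A⟩ and ⟨B⟩ can be glued if and only if some positive multiple of b belongs to ⟨A⟩, equivalently if and only if the linear system A·X = d·b has a solution X ∈ ℕ^p for some positive integer d. -/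
open MvPolynomial

/-- `⟨A ∪ B⟩` is a gluing of `⟨A⟩` and `⟨B⟩`:
`I_{A∪B} = I_A + I_B + ⟨x^α − y^β⟩` for some `α ≠ 0 ≠ β`. -/
def IsGluing (k : Type) [Field k] {n p q : ℕ}
    (A : Fin p → Fin n → ℕ) (B : Fin q → Fin n → ℕ) : Prop :=
  ∃ (α : Fin p → ℕ) (β : Fin q → ℕ), α ≠ 0 ∧ β ≠ 0 ∧
    toricIdeal k (Sum.elim A B) =
      Ideal.map (rename Sum.inl) (toricIdeal k A) ⊔
      Ideal.map (rename Sum.inr) (toricIdeal k B) ⊔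
      Ideal.span {(∏ j, X (Sum.inl j) ^ α j : MvPolynomial (Fin p ⊕ Fin q) k) -
        ∏ j, X (Sum.inr j) ^ β j}

/-- `⟨A⟩` and `⟨B⟩` can be glued: for some positive `k₁, k₂`, the semigroup
`⟨k₁A ∪ k₂B⟩` is a gluing of `⟨k₁A⟩` and `⟨k₂B⟩`. -/
def CanBeGlued (k : Type) [Field k] {n p q : ℕ}
    (A : Fin p → Fin n → ℕ) (B : Fin q → Fin n → ℕ) : Prop :=
  ∃ k1 k2 : ℕ, 0 < k1 ∧ 0 < k2 ∧
    IsGluing k (fun j i => k1 * A j i) (fun j i => k2 * B j i)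

/-!
If `⟨k₁A⟩` and `⟨k₂B⟩` glue along `x^α - y^β`, this binomial lies in the toric ideal, so
`k₁ A α = k₂ (∑ β_j u_j) b` exhibits a positive multiple of `b` in `⟨A⟩`.

Conversely, let `A X = d b`, let `g = gcd(u)`, and pick `t` prime to `d` with
`g t = ∑ c_j u_j ∈ ⟨u⟩` (every large multiple of `g` lies in `⟨u⟩`). Glue `⟨g t A⟩` and `⟨d B⟩`
along `ρ = x^X - y^c`. The toric ideal is spanned by binomials `x^α y^β - x^α' y^β'` of equal
degree. If `s = ∑ β_j u_j ≥ s' = ∑ β'_j u_j`, then `g t ∣ d (s - s')` because `gcd(b) = 1`;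
as `g ∣ s - s'` and `t` is prime to `d`, `s - s' = l g t`. Then
`x^α y^β - x^α' y^β' = x^α (y^β - y^(β' + l c)) + x^α y^β' (y^(l c) - x^(l X))
  + (x^(α + l X) - x^α') y^β'`
with the three terms in `I_{dB}`, `⟨ρ⟩` and `I_{g t A}` respectively.
-/

namespace MvPolynomial

variable {R : Type*} [CommSemiring R] {ι : Type*} [Fintype ι]

variable (R) in
noncomputable def prodXPow (c : ι → ℕ) : MvPolynomial ι R :=
  ∏ i, X i ^ c i

theorem prodXPow_eq_monomial (c : ι → ℕ) :
    prodXPow R c = monomial (Finsupp.equivFunOnFinite.symm c) 1 := by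
  rw [monomial_eq, C_1, one_mul, Finsupp.prod_fintype _ _ fun _ => pow_zero _]
  rfl

theorem prodXPow_injective [Nontrivial R] : Function.Injective (prodXPow R (ι := ι)) := by
  intro c c' h
  simp only [prodXPow_eq_monomial] at h
  exact Finsupp.equivFunOnFinite.symm.injective (monomial_left_injective one_ne_zero h)

theorem prodXPow_add (c c' : ι → ℕ) : prodXPow R (c + c') = prodXPow R c * prodXPow R c' := by
  simp only [prodXPow, Pi.add_apply, pow_add, Finset.prod_mul_distrib]

theorem prodXPow_smul (l : ℕ) (c : ι → ℕ) : prodXPow R (l • c) = prodXPow R c ^ l := by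
  simp only [prodXPow, Pi.smul_apply, smul_eq_mul, ← Finset.prod_pow, ← pow_mul, mul_comm]

theorem prodXPow_zero : prodXPow R (0 : ι → ℕ) = 1 := by
  simp [prodXPow]

theorem prodXPow_sum {κ : Type*} (s : Finset κ) (c : κ → ι → ℕ) :
    prodXPow R (∑ j ∈ s, c j) = ∏ j ∈ s, prodXPow R (c j) := by
  simp only [prodXPow, Finset.sum_apply, ← Finset.prod_pow_eq_pow_sum]
  exact Finset.prod_comm

theorem aeval_prodXPow {κ : Type*} [Fintype κ] (A : κ → ι → ℕ) (γ : κ → ℕ) :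
    aeval (fun j => prodXPow R (A j)) (prodXPow R γ) =
      prodXPow R (Fintype.linearCombination ℕ A γ) := by
  simp only [Fintype.linearCombination_apply, prodXPow_sum, prodXPow_smul]
  simp only [prodXPow, map_prod, map_pow, aeval_X]

theorem aeval_eq_mapDomain {κ : Type*} [Fintype κ] (A : κ → ι → ℕ) (f : MvPolynomial κ R) :
    aeval (fun j => prodXPow R (A j)) f = AddMonoidAlgebra.mapDomain
      (fun m : κ →₀ ℕ => Finsupp.equivFunOnFinite.symm (Fintype.linearCombination ℕ A m)) f := by
  induction f using MvPolynomial.induction_on' with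
  | monomial m a =>
    have hm : monomial m (1 : R) = prodXPow R m := by
      rw [prodXPow_eq_monomial, Finsupp.equivFunOnFinite_symm_coe]
    calc aeval (fun j => prodXPow R (A j)) (monomial m a)
        = a • aeval (fun j => prodXPow R (A j)) (prodXPow R m) := by
          rw [← hm, ← map_smul, smul_monomial, smul_eq_mul, mul_one]
      _ = _ := by
          rw [aeval_prodXPow, prodXPow_eq_monomial, smul_monomial, smul_eq_mul, mul_one,
            ← single_eq_monomial, ← single_eq_monomial, AddMonoidAlgebra.mapDomain_single]
  | add f g hf hg => rw [map_add, hf, hg, AddMonoidAlgebra.mapDomain_add]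

theorem rename_prodXPow {τ : Type*} (f : ι → τ) (c : ι → ℕ) :
    rename f (prodXPow R c) = ∏ i, X (f i) ^ c i := by
  simp only [prodXPow, map_prod, map_pow, rename_X]

theorem prodXPow_sumElim {κ : Type*} [Fintype κ] (c : ι → ℕ) (c' : κ → ℕ) :
    prodXPow R (Sum.elim c c') =
      rename Sum.inl (prodXPow R c) * rename Sum.inr (prodXPow R c') := by
  rw [rename_prodXPow, rename_prodXPow]
  simp only [prodXPow, Fintype.prod_sum_type, Sum.elim_inl, Sum.elim_inr]

theorem prodXPow_sumElim_zero {κ : Type*} [Fintype κ] (c : ι → ℕ) :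
    prodXPow R (Sum.elim c (0 : κ → ℕ)) = ∏ i, X (Sum.inl i) ^ c i := by
  rw [prodXPow_sumElim, prodXPow_zero, map_one, mul_one, rename_prodXPow]

theorem prodXPow_zero_sumElim {κ : Type*} [Fintype κ] (c : κ → ℕ) :
    prodXPow R (Sum.elim (0 : ι → ℕ) c) = ∏ i, X (Sum.inr i) ^ c i := by
  rw [prodXPow_sumElim, prodXPow_zero, map_one, one_mul, rename_prodXPow]

end MvPolynomial

namespace AddMonoidAlgebra

theorem mem_span_single_sub_single_of_mapDomain_eq_zero {M N R : Type*} [Ring R]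
    [Nonempty M] {φ : M → N} {f : AddMonoidAlgebra R M} (hf : f.mapDomain φ = 0) :
    f ∈ Submodule.span R {g | ∃ a a', φ a = φ a' ∧ single a 1 - single a' 1 = g} := by
  -- `r` picks a representative of each fibre of `φ`: `f - f.mapDomain r` is a combination of
  -- binomials, and `f.mapDomain r` factors through `f.mapDomain φ = 0`.
  set r := Function.invFun φ ∘ φ
  have hr : f.mapDomain r = 0 := by
    have : f.mapDomain r = (f.mapDomain φ).mapDomain (Function.invFun φ) := by
      ext; simp [r, Finsupp.mapDomain_comp]
    rw [this, hf, mapDomain_zero]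
  have hsum : f = f.coeff.sum fun a c => c • (single a 1 - single (r a) 1) := by
    simp only [smul_sub, smul_single, smul_eq_mul, mul_one, Finsupp.sum_sub]
    have hmap : (f.coeff.sum fun a c => single (r a) c) = f.mapDomain r := by
      conv_rhs => rw [← sum_coeff_single f, mapDomain_sum]
      simp only [mapDomain_single]
    rw [sum_coeff_single, hmap, hr, sub_zero]
  rw [hsum]
  exact Submodule.sum_mem _ fun a _ => Submodule.smul_mem _ _
    (Submodule.subset_span ⟨a, r a, (Function.invFun_eq ⟨a, rfl⟩).symm, rfl⟩)

end AddMonoidAlgebra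

open Fintype (linearCombination)

section Toric

variable {k : Type} [Field k] {n : ℕ} {σ : Type}

theorem prodXPow_sub_prodXPow_mem_toricIdeal_iff [Fintype σ] {A : σ → Fin n → ℕ} {γ γ' : σ → ℕ} :
    prodXPow k γ - prodXPow k γ' ∈ toricIdeal k A ↔
      linearCombination ℕ A γ = linearCombination ℕ A γ' := by
  rw [toricIdeal, RingHom.mem_ker, map_sub, sub_eq_zero]
  change aeval (fun j => prodXPow k (A j)) _ = aeval (fun j => prodXPow k (A j)) _ ↔ _
  rw [aeval_prodXPow, aeval_prodXPow, prodXPow_injective.eq_iff]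

theorem toricIdeal_eq_span [Fintype σ] (A : σ → Fin n → ℕ) :
    toricIdeal k A = Ideal.span {f | ∃ γ γ' : σ → ℕ,
      linearCombination ℕ A γ = linearCombination ℕ A γ' ∧ prodXPow k γ - prodXPow k γ' = f} := by
  refine le_antisymm (fun f hf => ?_) <| Ideal.span_le.mpr fun _ ⟨γ, γ', h, hf⟩ =>
    hf ▸ prodXPow_sub_prodXPow_mem_toricIdeal_iff.mpr h
  have hf' := AddMonoidAlgebra.mem_span_single_sub_single_of_mapDomain_eq_zero <|
    (aeval_eq_mapDomain A f).symm.trans (RingHom.mem_ker.mp hf)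
  refine Submodule.span_le_restrictScalars k _ _ (Submodule.span_mono ?_ hf')
  rintro _ ⟨m, m', h, rfl⟩
  refine ⟨m, m', Finsupp.equivFunOnFinite.symm.injective h, ?_⟩
  simp only [prodXPow_eq_monomial, Finsupp.equivFunOnFinite_symm_coe, single_eq_monomial]

theorem map_rename_toricIdeal_le {τ : Type} (f : σ → τ) (A : τ → Fin n → ℕ) :
    (toricIdeal k (A ∘ f)).map (rename f) ≤ toricIdeal k A := by
  rw [Ideal.map_le_iff_le_comap]
  intro P hP
  rw [Ideal.mem_comap, toricIdeal, RingHom.mem_ker, aeval_rename]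
  exact hP

end Toric

theorem Fintype.linearCombination_sumElim {R M ι κ : Type*} [Semiring R] [AddCommMonoid M]
    [Module R M] [Fintype ι] [Fintype κ] (v : ι → M) (w : κ → M) (a : ι → R) (b : κ → R) :
    linearCombination R (Sum.elim v w) (Sum.elim a b) =
      linearCombination R v a + linearCombination R w b := by
  simp only [Fintype.linearCombination_apply, Fintype.sum_sum_type, Sum.elim_inl, Sum.elim_inr]

section Gluing

variable {k : Type} [Field k] {n p q : ℕ} {A : Fin p → Fin n → ℕ} {B : Fin q → Fin n → ℕ}

variable (k A B) in
noncomputable def gluingIdeal (α₀ : Fin p → ℕ) (β₀ : Fin q → ℕ) :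
    Ideal (MvPolynomial (Fin p ⊕ Fin q) k) :=
  Ideal.map (rename Sum.inl) (toricIdeal k A) ⊔
    Ideal.map (rename Sum.inr) (toricIdeal k B) ⊔
    Ideal.span {(∏ j, X (Sum.inl j) ^ α₀ j : MvPolynomial (Fin p ⊕ Fin q) k) -
      ∏ j, X (Sum.inr j) ^ β₀ j}

theorem gluing_binomial_mem_toricIdeal_iff {α₀ : Fin p → ℕ} {β₀ : Fin q → ℕ} :
    (∏ j, X (Sum.inl j) ^ α₀ j - ∏ j, X (Sum.inr j) ^ β₀ j : MvPolynomial (Fin p ⊕ Fin q) k) ∈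
      toricIdeal k (Sum.elim A B) ↔ linearCombination ℕ A α₀ = linearCombination ℕ B β₀ := by
  rw [← prodXPow_sumElim_zero (κ := Fin q), ← prodXPow_zero_sumElim (ι := Fin p),
    prodXPow_sub_prodXPow_mem_toricIdeal_iff, Fintype.linearCombination_sumElim,
    Fintype.linearCombination_sumElim, map_zero, map_zero, add_zero, zero_add]

theorem gluingIdeal_le_toricIdeal {α₀ : Fin p → ℕ} {β₀ : Fin q → ℕ}
    (hρ : linearCombination ℕ A α₀ = linearCombination ℕ B β₀) :
    gluingIdeal k A B α₀ β₀ ≤ toricIdeal k (Sum.elim A B) :=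
  sup_le (sup_le (map_rename_toricIdeal_le Sum.inl (Sum.elim A B))
    (map_rename_toricIdeal_le Sum.inr (Sum.elim A B)))
    (Ideal.span_le.mpr <| Set.singleton_subset_iff.mpr <|
      gluing_binomial_mem_toricIdeal_iff.mpr hρ)

theorem prodXPow_sub_prodXPow_mem_gluingIdeal {α₀ : Fin p → ℕ} {β₀ : Fin q → ℕ}
    (hρ : linearCombination ℕ A α₀ = linearCombination ℕ B β₀) {α α' : Fin p → ℕ}
    {β β' : Fin q → ℕ} (hdeg : linearCombination ℕ A α + linearCombination ℕ B β =
      linearCombination ℕ A α' + linearCombination ℕ B β') {l : ℕ}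
    (hl : linearCombination ℕ B β = linearCombination ℕ B β' + l • linearCombination ℕ B β₀) :
    prodXPow k (Sum.elim α β) - prodXPow k (Sum.elim α' β') ∈ gluingIdeal k A B α₀ β₀ := by
  set x : (Fin p → ℕ) → MvPolynomial (Fin p ⊕ Fin q) k := fun a => rename Sum.inl (prodXPow k a)
  set y : (Fin q → ℕ) → MvPolynomial (Fin p ⊕ Fin q) k := fun b => rename Sum.inr (prodXPow k b)
  have hB : linearCombination ℕ B β = linearCombination ℕ B (β' + l • β₀) := by
    rw [map_add, map_smul, hl]
  have hA : linearCombination ℕ A (α + l • α₀) = linearCombination ℕ A α' := by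
    refine add_right_cancel (b := linearCombination ℕ B β') ?_
    rw [← hdeg, hl, map_add, map_smul, hρ, add_assoc, add_comm (l • _)]
  have memB : y β - y (β' + l • β₀) ∈ Ideal.map (rename Sum.inr) (toricIdeal k B) := by
    rw [← map_sub]
    exact Ideal.mem_map_of_mem _ (prodXPow_sub_prodXPow_mem_toricIdeal_iff.mpr hB)
  have memA : x (α + l • α₀) - x α' ∈ Ideal.map (rename Sum.inl) (toricIdeal k A) := by
    rw [← map_sub]
    exact Ideal.mem_map_of_mem _ (prodXPow_sub_prodXPow_mem_toricIdeal_iff.mpr hA)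
  have memρ : y β₀ ^ l - x α₀ ^ l ∈ Ideal.span {(∏ j, X (Sum.inl j) ^ α₀ j :
      MvPolynomial (Fin p ⊕ Fin q) k) - ∏ j, X (Sum.inr j) ^ β₀ j} := by
    rw [Ideal.mem_span_singleton, ← rename_prodXPow, ← rename_prodXPow, dvd_sub_comm]
    exact sub_dvd_pow_sub_pow _ _ l
  have hsplit : prodXPow k (Sum.elim α β) - prodXPow k (Sum.elim α' β') =
      x α * (y β - y (β' + l • β₀)) + x α * y β' * (y β₀ ^ l - x α₀ ^ l) +
        (x (α + l • α₀) - x α') * y β' := by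
    simp only [x, y, prodXPow_sumElim, prodXPow_add, prodXPow_smul, map_mul, map_pow]
    ring
  rw [hsplit]
  exact add_mem (add_mem (Ideal.mem_sup_left (Ideal.mem_sup_right (Ideal.mul_mem_left _ _ memB)))
    (Ideal.mem_sup_right (Ideal.mul_mem_left _ _ memρ)))
    (Ideal.mem_sup_left (Ideal.mem_sup_left (Ideal.mul_mem_right _ _ memA)))

theorem isGluing_of_forall_exists_smul {α₀ : Fin p → ℕ} {β₀ : Fin q → ℕ} (hα₀ : α₀ ≠ 0)
    (hβ₀ : β₀ ≠ 0) (hρ : linearCombination ℕ A α₀ = linearCombination ℕ B β₀)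
    (h : ∀ α α' β β', linearCombination ℕ A α + linearCombination ℕ B β =
      linearCombination ℕ A α' + linearCombination ℕ B β' → ∃ l : ℕ,
        linearCombination ℕ B β = linearCombination ℕ B β' + l • linearCombination ℕ B β₀ ∨
        linearCombination ℕ B β' = linearCombination ℕ B β + l • linearCombination ℕ B β₀) :
    IsGluing k A B := by
  refine ⟨α₀, β₀, hα₀, hβ₀, le_antisymm ?_ (gluingIdeal_le_toricIdeal hρ)⟩
  rw [toricIdeal_eq_span, Ideal.span_le]
  rintro _ ⟨γ, γ', hγ, rfl⟩
  change _ ∈ gluingIdeal k A B α₀ β₀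
  rw [← Sum.elim_comp_inl_inr γ, ← Sum.elim_comp_inl_inr γ'] at hγ ⊢
  rw [Fintype.linearCombination_sumElim, Fintype.linearCombination_sumElim] at hγ
  obtain ⟨l, hl | hl⟩ := h _ _ _ _ hγ
  · exact prodXPow_sub_prodXPow_mem_gluingIdeal hρ hγ hl
  · simpa only [neg_sub] using
      neg_mem (prodXPow_sub_prodXPow_mem_gluingIdeal (k := k) hρ hγ.symm hl)

theorem IsGluing.exists_linearCombination_eq (h : IsGluing k A B) :
    ∃ α₀ β₀, α₀ ≠ 0 ∧ β₀ ≠ 0 ∧ linearCombination ℕ A α₀ = linearCombination ℕ B β₀ := by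
  obtain ⟨α₀, β₀, hα₀, hβ₀, heq⟩ := h
  refine ⟨α₀, β₀, hα₀, hβ₀, (gluing_binomial_mem_toricIdeal_iff (k := k)).mp ?_⟩
  rw [heq]
  exact Ideal.mem_sup_right (Ideal.subset_span rfl)

end Gluing

theorem Fintype.linearCombination_mul_left {ι : Type*} [Fintype ι] {n : ℕ} (A : ι → Fin n → ℕ)
    (c : ℕ) (α : ι → ℕ) :
    linearCombination ℕ (fun j i => c * A j i) α = c • linearCombination ℕ A α := by
  ext i
  simp only [Fintype.linearCombination_apply, Finset.sum_apply, Pi.smul_apply, smul_eq_mul,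
    Finset.mul_sum, mul_left_comm]

theorem Fintype.linearCombination_line {ι : Type*} [Fintype ι] {n : ℕ} (u : ι → ℕ)
    (b : Fin n → ℕ) (β : ι → ℕ) :
    linearCombination ℕ (fun j i => u j * b i) β = linearCombination ℕ u β • b := by
  ext i
  simp only [Fintype.linearCombination_apply, Finset.sum_apply, Pi.smul_apply, smul_eq_mul,
    Finset.sum_mul]
  exact Finset.sum_congr rfl fun j _ => by ring

theorem Fintype.linearCombination_pos {ι : Type*} [Fintype ι] {u : ι → ℕ} (hu : ∀ j, 0 < u j)
    {β : ι → ℕ} (hβ : β ≠ 0) : 0 < linearCombination ℕ u β := by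
  obtain ⟨j, hj⟩ := Function.ne_iff.mp hβ
  rw [Fintype.linearCombination_apply]
  exact Finset.sum_pos' (fun _ _ => Nat.zero_le _)
    ⟨j, Finset.mem_univ _, Nat.mul_pos (Nat.pos_of_ne_zero hj) (hu j)⟩

theorem Nat.exists_coprime_mul_setGcd_mem_closure (s : Set ℕ) {d : ℕ} (hd : 0 < d) :
    ∃ t, 0 < t ∧ t.Coprime d ∧ setGcd s * t ∈ AddSubmonoid.closure s := by
  obtain ⟨N, hN⟩ := exists_mem_closure_of_ge s
  refine ⟨d * N + 1, Nat.succ_pos _, ?_, ?_⟩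
  · rw [Nat.coprime_mul_left_add_left]
    exact Nat.coprime_one_left d
  · rcases (setGcd s).eq_zero_or_pos with h | h
    · rw [h, zero_mul]
      exact zero_mem _
    · refine hN _ ?_ (dvd_mul_right _ _)
      calc N ≤ d * N := Nat.le_mul_of_pos_left N hd
        _ ≤ d * N + 1 := Nat.le_succ _
        _ ≤ setGcd s * (d * N + 1) := Nat.le_mul_of_pos_left _ h

theorem Nat.mul_dvd_of_dvd_mul_of_coprime {g t d δ : ℕ} (hg : g ∣ δ) (ht : t.Coprime d)
    (h : g * t ∣ d * δ) : g * t ∣ δ := by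
  obtain ⟨δ', rfl⟩ := hg
  rcases g.eq_zero_or_pos with rfl | hg0
  · simp
  refine mul_dvd_mul_left g (ht.dvd_of_dvd_mul_left ?_)
  exact Nat.dvd_of_mul_dvd_mul_left hg0 (by rwa [mul_left_comm] at h)

theorem dvd_of_smul_add_smul_eq {ι : Type*} [Fintype ι] {b v v' : ι → ℕ}
    (hb : Finset.univ.gcd b = 1) {m c : ℕ} (h : m • v + c • b = m • v') : m ∣ c := by
  have hi : ∀ i, m ∣ c * b i := fun i => by
    have hmi : m * v i + c * b i = m * v' i := by simpa using congrFun h i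
    exact (Nat.dvd_add_right (dvd_mul_right m (v i))).mp (hmi ▸ dvd_mul_right m (v' i))
  simpa [Finset.gcd_mul_left, hb] using Finset.dvd_gcd (s := Finset.univ) fun i _ => hi i

theorem exists_eq_add_mul_of_smul_add_smul_eq {ι : Type*} [Fintype ι] {b v v' : ι → ℕ}
    (hb : Finset.univ.gcd b = 1) {g t d x y : ℕ} (ht : t.Coprime d) (hgx : g ∣ x) (hgy : g ∣ y)
    (hyx : y ≤ x) (h : (g * t) • v + (d * x) • b = (g * t) • v' + (d * y) • b) :
    ∃ l, x = y + l * (g * t) := by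
  obtain ⟨δ, rfl⟩ := Nat.exists_eq_add_of_le hyx
  have h' : (g * t) • v + (d * δ) • b = (g * t) • v' := by
    refine add_right_cancel (b := (d * y) • b) ?_
    rw [← h, add_assoc, ← add_smul, add_comm (d * δ), ← mul_add]
  obtain ⟨l, hl⟩ := Nat.mul_dvd_of_dvd_mul_of_coprime ((Nat.dvd_add_right hgy).mp hgx) ht
    (dvd_of_smul_add_smul_eq hb h')
  exact ⟨l, by rw [hl, mul_comm]⟩

section Line

variable {k : Type} [Field k] {n p q : ℕ} {A : Fin p → Fin n → ℕ} {b : Fin n → ℕ}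
  {u : Fin q → ℕ}

theorem exists_smul_mem_of_canBeGlued (hu : ∀ j, 0 < u j)
    (h : CanBeGlued k A (fun j i => u j * b i)) :
    ∃ d, 0 < d ∧ ∃ X, linearCombination ℕ A X = d • b := by
  obtain ⟨k₁, k₂, -, hk₂, hglue⟩ := h
  obtain ⟨α, β, -, hβ, hρ⟩ := hglue.exists_linearCombination_eq
  simp only [Fintype.linearCombination_mul_left, Fintype.linearCombination_line, smul_smul] at hρ
  exact ⟨k₂ * linearCombination ℕ u β, Nat.mul_pos hk₂ (Fintype.linearCombination_pos hu hβ),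
    k₁ • α, by rw [map_smul, hρ]⟩

theorem canBeGlued_of_smul_mem [Nonempty (Fin q)] (hb : Finset.univ.gcd b = 1)
    (hu : ∀ j, 0 < u j) {d : ℕ} (hd : 0 < d) {X : Fin p → ℕ}
    (hX : linearCombination ℕ A X = d • b) : CanBeGlued k A (fun j i => u j * b i) := by
  set g := Nat.setGcd (Set.range u)
  have hg : 0 < g := by
    refine Nat.pos_of_ne_zero fun h => ?_
    obtain j := Classical.arbitrary (Fin q)
    exact (hu j).ne' (Nat.setGcd_eq_zero_iff.mp h ⟨j, rfl⟩)
  have hgu : ∀ β, g ∣ linearCombination ℕ u β := fun β => Nat.setGcd_dvd_of_mem_closure <|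
    AddSubmonoid.mem_closure_range_iff_of_fintype.mpr ⟨β, Fintype.linearCombination_apply _ _ _⟩
  obtain ⟨t, ht, htd, hmem⟩ := Nat.exists_coprime_mul_setGcd_mem_closure (Set.range u) hd
  obtain ⟨c, hc⟩ := AddSubmonoid.mem_closure_range_iff_of_fintype.mp hmem
  rw [← Fintype.linearCombination_apply] at hc
  have hsmul : ∀ {x y l : ℕ}, x = y + l * (g * t) →
      (d * x) • b = (d * y) • b + (l * (d * (g * t))) • b := by
    rintro x y l rfl
    rw [← add_smul]
    ring_nf
  refine ⟨g * t, d, Nat.mul_pos hg ht, hd,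
    isGluing_of_forall_exists_smul (α₀ := X) (β₀ := c) ?_ ?_ ?_ ?_⟩
  · rintro rfl
    rw [map_zero, eq_comm, smul_eq_zero] at hX
    refine hX.elim hd.ne' fun hb0 => zero_ne_one (α := ℕ) ?_
    rw [← hb, eq_comm, Finset.gcd_eq_zero_iff]
    exact fun i _ => congrFun hb0 i
  · rintro rfl
    rw [map_zero] at hc
    exact (Nat.mul_pos hg ht).ne' hc
  · rw [Fintype.linearCombination_mul_left, Fintype.linearCombination_mul_left,
      Fintype.linearCombination_line, hX, ← hc, smul_smul, smul_smul, mul_comm]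
  · intro α α' β β' hdeg
    simp only [Fintype.linearCombination_mul_left, Fintype.linearCombination_line, smul_smul,
      ← hc] at hdeg ⊢
    rcases le_total (linearCombination ℕ u β') (linearCombination ℕ u β) with hle | hle
    · obtain ⟨l, hl⟩ := exists_eq_add_mul_of_smul_add_smul_eq hb htd (hgu β) (hgu β') hle hdeg
      exact ⟨l, Or.inl (hsmul hl)⟩
    · obtain ⟨l, hl⟩ :=
        exists_eq_add_mul_of_smul_add_smul_eq hb htd (hgu β') (hgu β) hle hdeg.symm
      exact ⟨l, Or.inr (hsmul hl)⟩

end Line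

theorem line_glue_iff_general (k : Type) [Field k] {n p q : ℕ} (hq : 2 ≤ q)
    (A : Fin p → Fin n → ℕ) (b : Fin n → ℕ)
    (hgcdb : Finset.univ.gcd b = 1)
    (u : Fin q → ℕ) (hu : ∀ j, 0 < u j) :
    CanBeGlued k A (fun j i => u j * b i) ↔
      ∃ d : ℕ, 0 < d ∧ ∃ Xv : Fin p → ℕ, ∀ i, ∑ j, Xv j * A j i = d * b i := by
  have : Nonempty (Fin q) := ⟨⟨0, by omega⟩⟩
  have hcoord : ∀ (d : ℕ) (Xv : Fin p → ℕ),
      (∀ i, ∑ j, Xv j * A j i = d * b i) ↔ linearCombination ℕ A Xv = d • b := by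
    simp [funext_iff, Fintype.linearCombination_apply, Finset.sum_apply]
  simp only [hcoord]
  exact ⟨exists_smul_mem_of_canBeGlued hu,
    fun ⟨_, hd, _, hX⟩ => canBeGlued_of_smul_mem hgcdb hu hd hX⟩

/-- Characterization when the elements of `B` lie on a line: for `B = (u₁b,…,u_qb)` with
`q ≥ 2` and `gcd(b₁,…,b_n) = 1`, `⟨A⟩` and `⟨B⟩` can be glued if and only if some positive
multiple of `b` lies in `⟨A⟩`, i.e. `A·X = d·b` has a solution `X ∈ ℕ^p` for some `d > 0`. -/
theorem line_glue_iff (k : Type) [Field k] {n p q : ℕ} (hq : 2 ≤ q)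
    (A : Fin p → Fin n → ℕ) (b : Fin n → ℕ) (hb : b ≠ 0)
    (hgcdb : Finset.univ.gcd b = 1)
    (u : Fin q → ℕ) (hu : ∀ j, 0 < u j) :
    CanBeGlued k A (fun j i => u j * b i) ↔
      ∃ d : ℕ, 0 < d ∧ ∃ Xv : Fin p → ℕ, ∀ i, ∑ j, Xv j * A j i = d * b i :=
  line_glue_iff_general k hq A b hgcdb u hu
end
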